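/- arXiv:1501.07622 — 7 statements merged into one kernel-verified Lean document; each statement's English description precedes it below -/
import Mathlib

section
/- Under the linear model y_i = β^⊤ x_i + ε_i with E_m[ε_i] = 0, and for a matrix of imputation probabilities ψ satisfying the calibration condition ∑_{j ∈ S_m} d_j ∑_{i ∈ S_r} ψ_{ij} x_i = ∑_{j ∈ S_m} d_j x_j, the conditional model-expected imputation error vanishes: E_m E_I[Ŷ_I − Ŷ] = 0, where Ŷ_I = ∑_{i ∈ S_r} d_i y_i + ∑_{j ∈ S_m} d_j ∑_{i ∈ S_r} ψ_{ij} y_i and Ŷ = ∑_{i ∈ S_r ∪ S_m} d_i y_i. -/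
open Finset

lemma swap_mul {α γ : Type*} [Fintype α] [Fintype γ] (a : α → ℝ) (b : γ → ℝ) (c : α → γ → ℝ) :
    ∑ i, a i * ∑ t, b t * c i t = ∑ t, b t * ∑ i, a i * c i t := by
  simp only [Finset.mul_sum]
  rw [Finset.sum_comm]
  exact Finset.sum_congr rfl fun t _ => Finset.sum_congr rfl fun i _ => by ring

/-- under the linear model and the calibration condition,
E_m E_I[Ŷ_I − Ŷ] = 0. -/
theorem stmt3 {ιr ιm : Type*} [Fintype ιr] [Fintype ιm] {Q : ℕ}
    {Ωm : Type*} [Fintype Ωm]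
    (pm : Ωm → ℝ) (hpm : ∀ ω, 0 ≤ pm ω) (hpm1 : ∑ ω, pm ω = 1)
    (d_r : ιr → ℝ) (d_m : ιm → ℝ)
    (x_r : ιr → Fin Q → ℝ) (x_m : ιm → Fin Q → ℝ)
    (β : Fin Q → ℝ) (ε_r : Ωm → ιr → ℝ) (ε_m : Ωm → ιm → ℝ)
    (y_r : Ωm → ιr → ℝ) (y_m : Ωm → ιm → ℝ)
    (hyr : ∀ ω i, y_r ω i = (∑ t, β t * x_r i t) + ε_r ω i)
    (hym : ∀ ω j, y_m ω j = (∑ t, β t * x_m j t) + ε_m ω j)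
    (hεr : ∀ i, ∑ ω, pm ω * ε_r ω i = 0)
    (hεm : ∀ j, ∑ ω, pm ω * ε_m ω j = 0)
    (ψ : ιr → ιm → ℝ)
    (hcal : ∀ t, ∑ j, d_m j * ∑ i, ψ i j * x_r i t = ∑ j, d_m j * x_m j t) :
    ∑ ω, pm ω *
      ((∑ i, d_r i * y_r ω i + ∑ j, d_m j * ∑ i, ψ i j * y_r ω i)
        - (∑ i, d_r i * y_r ω i + ∑ j, d_m j * y_m ω j)) = 0 := by
  have hEyr : ∀ i, ∑ ω, pm ω * y_r ω i = ∑ t, β t * x_r i t := by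
    intro i
    simp only [hyr, mul_add, Finset.sum_add_distrib, hεr, add_zero, ← Finset.sum_mul, hpm1,
      one_mul]
  have hEym : ∀ j, ∑ ω, pm ω * y_m ω j = ∑ t, β t * x_m j t := by
    intro j
    simp only [hym, mul_add, Finset.sum_add_distrib, hεm, add_zero, ← Finset.sum_mul, hpm1,
      one_mul]
  have key : ∑ ω, pm ω *
      ((∑ i, d_r i * y_r ω i + ∑ j, d_m j * ∑ i, ψ i j * y_r ω i)
        - (∑ i, d_r i * y_r ω i + ∑ j, d_m j * y_m ω j))
      = ∑ j, d_m j * ∑ i, ψ i j * (∑ ω, pm ω * y_r ω i)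
        - ∑ j, d_m j * (∑ ω, pm ω * y_m ω j) := by
    simp only [add_sub_add_left_eq_sub, mul_sub, Finset.sum_sub_distrib, Finset.mul_sum]
    congr 1
    · rw [Finset.sum_comm]
      refine Finset.sum_congr rfl fun j _ => ?_
      rw [Finset.sum_comm]
      exact Finset.sum_congr rfl fun i _ => Finset.sum_congr rfl fun ω _ => by ring
    · rw [Finset.sum_comm]
      exact Finset.sum_congr rfl fun j _ => Finset.sum_congr rfl fun ω _ => by ring
  rw [key]
  simp only [hEyr, hEym]
  have h1 : ∀ j, ∑ i, ψ i j * ∑ t, β t * x_r i t = ∑ t, β t * ∑ i, ψ i j * x_r i t :=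
    fun j => swap_mul (fun i => ψ i j) β (fun i t => x_r i t)
  simp only [h1]
  rw [swap_mul d_m β (fun j t => ∑ i, ψ i j * x_r i t),
    swap_mul d_m β (fun j t => x_m j t)]
  simp only [hcal, sub_self]
end

section
/- If the relation between the variable of interest and the auxiliary variables is strictly linear, y_i = β^⊤ x_i for all i, and the imputation matrix φ is exactly balanced in the sense that ∑_{i ∈ S_r} φ_{ij} x_i = ∑_{i ∈ S_r} ψ_{ij} x_i for each j ∈ S_m, then the imputed total estimator Ŷ_I = ∑_{i ∈ S_r} d_i y_i + ∑_{j ∈ S_m} d_j ∑_{i ∈ S_r} φ_{ij} y_i is nonrandom: Ŷ_I = E_I[Ŷ_I], hence Var_I(Ŷ_I) = 0. -/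
open Finset

/-- under a strictly linear model and exact balancing,
the imputed total estimator is nonrandom and its imputation variance is 0. -/
theorem stmt4 {ιr ιm : Type*} [Fintype ιr] [Fintype ιm] {Q : ℕ}
    {Ω : Type*} [Fintype Ω]
    (p : Ω → ℝ) (hp : ∀ ω, 0 ≤ p ω) (hp1 : ∑ ω, p ω = 1)
    (d_r : ιr → ℝ) (d_m : ιm → ℝ) (x_r : ιr → Fin Q → ℝ)
    (β : Fin Q → ℝ) (y_r : ιr → ℝ)
    (hy : ∀ i, y_r i = ∑ t, β t * x_r i t)
    (φ : Ω → ιr → ιm → ℝ) (hφ01 : ∀ ω i j, φ ω i j = 0 ∨ φ ω i j = 1)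
    (hφcol : ∀ ω j, ∑ i, φ ω i j = 1)
    (ψ : ιr → ιm → ℝ) (hψ : ∀ i j, ψ i j = ∑ ω, p ω * φ ω i j)
    (hbal : ∀ ω j t, ∑ i, φ ω i j * x_r i t = ∑ i, ψ i j * x_r i t)
    (YI : Ω → ℝ)
    (hYI : ∀ ω, YI ω = ∑ i, d_r i * y_r i + ∑ j, d_m j * ∑ i, φ ω i j * y_r i) :
    (∀ ω, YI ω = ∑ ω', p ω' * YI ω') ∧
      ∑ ω, p ω * (YI ω - ∑ ω', p ω' * YI ω') ^ 2 = 0 := by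
  have h1 : ∀ (c : ιr → ιm → ℝ) (j : ιm), ∑ i, c i j * y_r i
      = ∑ t, β t * ∑ i, c i j * x_r i t := by
    intro c j
    simp only [hy, Finset.mul_sum]
    rw [Finset.sum_comm]
    congr 1; ext t; congr 1; ext i; ring
  have key : ∀ ω j, ∑ i, φ ω i j * y_r i = ∑ i, ψ i j * y_r i := by
    intro ω j
    rw [h1 (φ ω) j, h1 ψ j]
    congr 1; ext t; rw [hbal ω j t]
  have hconst : ∀ ω, YI ω = ∑ i, d_r i * y_r i + ∑ j, d_m j * ∑ i, ψ i j * y_r i := by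
    intro ω
    rw [hYI ω]
    congr 1
    exact Finset.sum_congr rfl fun j _ => by rw [key ω j]
  have hmean : (∑ ω', p ω' * YI ω')
      = ∑ i, d_r i * y_r i + ∑ j, d_m j * ∑ i, ψ i j * y_r i := by
    calc ∑ ω', p ω' * YI ω'
        = ∑ ω', p ω' * (∑ i, d_r i * y_r i + ∑ j, d_m j * ∑ i, ψ i j * y_r i) := by
          exact Finset.sum_congr rfl fun ω' _ => by rw [hconst ω']
      _ = (∑ ω', p ω') * (∑ i, d_r i * y_r i + ∑ j, d_m j * ∑ i, ψ i j * y_r i) := by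
          rw [Finset.sum_mul]
      _ = _ := by rw [hp1, one_mul]
  have heq : ∀ ω, YI ω = ∑ ω', p ω' * YI ω' := fun ω => by rw [hconst ω, hmean]
  refine ⟨heq, ?_⟩
  simp only [fun ω => sub_eq_zero_of_eq (heq ω)]
  simp
end

section
/- Suppose the response indicators r_i are independent Bernoulli(θ_i) variables with θ_i = 1/(1 + ∑_{j ∈ S_m} (d_j/d_i) ψ_{ij}) equal to the true response probabilities, and suppose the propensity-score adjusted estimator ∑_{i ∈ S_r} (d_i/θ_i) y_i is unbiased for Y under the response mechanism, i.e., E_q[∑_{i ∈ S_r} (d_i/θ_i) y_i] = ∑_{i ∈ S} d_i y_i. Then the balanced k-nearest neighbor imputed total estimator is unbiased: E_p E_q E_I[Ŷ_I − Y] = 0. -/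
open Finset

/-- if the θ_i from the imputation probabilities are the true response
probabilities (so that the propensity-score adjusted estimator is unbiased under the
response mechanism) and the full-sample estimator is design-unbiased, then the
balanced k-nearest neighbor imputed total estimator is unbiased:
E_p E_q E_I[Ŷ_I − Y] = 0. -/
theorem stmt6 {U : Type*} [Fintype U] [DecidableEq U]
    {Ωp Ωq : Type*} [Fintype Ωp] [Fintype Ωq]
    (pp : Ωp → ℝ) (hpp : ∀ ω, 0 ≤ pp ω) (hpp1 : ∑ ω, pp ω = 1)
    (pq : Ωq → ℝ) (hpq : ∀ ω, 0 ≤ pq ω) (hpq1 : ∑ ω, pq ω = 1)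
    (d : U → ℝ) (hd : ∀ i, 0 < d i) (y : U → ℝ)
    (S : Ωp → Finset U) (Sr : Ωp → Ωq → Finset U)
    (hSr : ∀ ωp ωq, Sr ωp ωq ⊆ S ωp)
    (ψ : Ωp → Ωq → U → U → ℝ)
    (hψ0 : ∀ ωp ωq i j, 0 ≤ ψ ωp ωq i j)
    (θ : Ωp → Ωq → U → ℝ)
    (hθ : ∀ ωp ωq i, θ ωp ωq i
      = 1 / (1 + ∑ j ∈ S ωp \ Sr ωp ωq, (d j / d i) * ψ ωp ωq i j))
    (Y : ℝ) (hY : Y = ∑ i, y i)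
    (hdesign : ∑ ωp, pp ωp * ∑ i ∈ S ωp, d i * y i = Y)
    (hresp : ∀ ωp, ∑ ωq, pq ωq * ∑ i ∈ Sr ωp ωq, (d i / θ ωp ωq i) * y i
      = ∑ i ∈ S ωp, d i * y i) :
    ∑ ωp, pp ωp * ∑ ωq, pq ωq *
      ((∑ i ∈ Sr ωp ωq, d i * y i
        + ∑ j ∈ S ωp \ Sr ωp ωq, d j * ∑ i ∈ Sr ωp ωq, ψ ωp ωq i j * y i)
        - Y) = 0 := by
  -- key identity: the imputed estimator equals the propensity-adjusted estimator
  have key : ∀ ωp ωq,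
      ∑ i ∈ Sr ωp ωq, d i * y i
        + ∑ j ∈ S ωp \ Sr ωp ωq, d j * ∑ i ∈ Sr ωp ωq, ψ ωp ωq i j * y i
      = ∑ i ∈ Sr ωp ωq, (d i / θ ωp ωq i) * y i := by
    intro ωp ωq
    have hsum : ∀ i ∈ Sr ωp ωq, (d i / θ ωp ωq i) * y i
        = d i * y i + (∑ j ∈ S ωp \ Sr ωp ωq, d j * ψ ωp ωq i j) * y i := by
      intro i _
      have hne : d i ≠ 0 := (hd i).ne'
      have : d i / θ ωp ωq i = d i + ∑ j ∈ S ωp \ Sr ωp ωq, d j * ψ ωp ωq i j := by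
        rw [hθ, div_div_eq_mul_div, div_one, mul_add, mul_one, Finset.mul_sum]
        congr 1
        refine Finset.sum_congr rfl fun j _ => ?_
        field_simp
      rw [this, add_mul]
    rw [Finset.sum_congr rfl hsum, Finset.sum_add_distrib]
    congr 1
    simp_rw [Finset.mul_sum, Finset.sum_mul]
    rw [Finset.sum_comm]
    exact Finset.sum_congr rfl fun j _ => Finset.sum_congr rfl fun i _ => by ring
  have inner : ∀ ωp, ∑ ωq, pq ωq *
      ((∑ i ∈ Sr ωp ωq, d i * y i
        + ∑ j ∈ S ωp \ Sr ωp ωq, d j * ∑ i ∈ Sr ωp ωq, ψ ωp ωq i j * y i) - Y)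
      = (∑ i ∈ S ωp, d i * y i) - Y := by
    intro ωp
    have := hresp ωp
    calc ∑ ωq, pq ωq * ((∑ i ∈ Sr ωp ωq, d i * y i
        + ∑ j ∈ S ωp \ Sr ωp ωq, d j * ∑ i ∈ Sr ωp ωq, ψ ωp ωq i j * y i) - Y)
        = ∑ ωq, (pq ωq * ∑ i ∈ Sr ωp ωq, (d i / θ ωp ωq i) * y i - pq ωq * Y) := by
          refine Finset.sum_congr rfl fun ωq _ => ?_
          rw [key ωp ωq]; ring
      _ = (∑ i ∈ S ωp, d i * y i) - Y := by
          rw [Finset.sum_sub_distrib, this, ← Finset.sum_mul, hpq1, one_mul]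
  calc ∑ ωp, pp ωp * ∑ ωq, pq ωq *
      ((∑ i ∈ Sr ωp ωq, d i * y i
        + ∑ j ∈ S ωp \ Sr ωp ωq, d j * ∑ i ∈ Sr ωp ωq, ψ ωp ωq i j * y i) - Y)
      = ∑ ωp, (pp ωp * ∑ i ∈ S ωp, d i * y i - pp ωp * Y) := by
        refine Finset.sum_congr rfl fun ωp _ => ?_
        rw [inner ωp]; ring
    _ = 0 := by
        rw [Finset.sum_sub_distrib, hdesign, ← Finset.sum_mul, hpp1, one_mul, sub_self]
end

section
/- Suppose ψ_{ij} ≠ 0 only if i ∈ knn(j), and suppose that i ∈ knn(j) implies y_i = y_j for all (i,j) ∈ S_r × S_m. If also ∑_{i ∈ S_r} ψ_{ij} = 1 for each j ∈ S_m, then E_I[Ŷ_I − Ŷ] = ∑_{j ∈ S_m} d_j ∑_{i ∈ S_r} ψ_{ij}(y_i − y_j) = 0, and consequently the imputed total estimator is unbiased: E_p E_q E_I[Ŷ_I − Y] = 0. -/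
open Finset

/-- the neighborhood principle. If donors come from nearest neighborhoods
and neighbors share the same y value, then E_I[Ŷ_I − Ŷ] = 0 (with the displayed
decomposition), and consequently E_p E_q E_I[Ŷ_I − Y] = 0. -/
theorem stmt7 {U : Type*} [Fintype U] [DecidableEq U]
    {Ω : Type*} [Fintype Ω]
    (p : Ω → ℝ) (hp : ∀ ω, 0 ≤ p ω) (hp1 : ∑ ω, p ω = 1)
    (d y : U → ℝ) (Y : ℝ)
    (S : Ω → Finset U) (Sr : Ω → Finset U) (hSrS : ∀ ω, Sr ω ⊆ S ω)
    (knn : Ω → U → Finset U) (hknnSr : ∀ ω j, knn ω j ⊆ Sr ω)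
    (ψ : Ω → U → U → ℝ)
    (hsupp : ∀ ω i j, ψ ω i j ≠ 0 → i ∈ knn ω j)
    (hnbhd : ∀ ω j, j ∈ S ω \ Sr ω → ∀ i ∈ knn ω j, y i = y j)
    (hψcol : ∀ ω j, j ∈ S ω \ Sr ω → ∑ i ∈ Sr ω, ψ ω i j = 1)
    (hunbiased : ∑ ω, p ω * ((∑ i ∈ S ω, d i * y i) - Y) = 0)
    (YI Yhat : Ω → ℝ)
    (hYI : ∀ ω, YI ω = ∑ i ∈ Sr ω, d i * y i
      + ∑ j ∈ S ω \ Sr ω, d j * ∑ i ∈ Sr ω, ψ ω i j * y i)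
    (hYhat : ∀ ω, Yhat ω = ∑ i ∈ S ω, d i * y i) :
    (∀ ω, YI ω - Yhat ω
        = ∑ j ∈ S ω \ Sr ω, d j * ∑ i ∈ Sr ω, ψ ω i j * (y i - y j) ∧
        YI ω - Yhat ω = 0) ∧
    ∑ ω, p ω * (YI ω - Y) = 0 := by
  have key : ∀ ω, (YI ω - Yhat ω
        = ∑ j ∈ S ω \ Sr ω, d j * ∑ i ∈ Sr ω, ψ ω i j * (y i - y j)) ∧
        YI ω - Yhat ω = 0 := by
    intro ω
    have hsplit : ∑ i ∈ S ω, d i * y i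
        = ∑ i ∈ Sr ω, d i * y i + ∑ j ∈ S ω \ Sr ω, d j * y j :=
      by rw [← Finset.sum_sdiff (hSrS ω)]; ring
    have hterm0 : ∀ j ∈ S ω \ Sr ω, ∀ i ∈ Sr ω, ψ ω i j * (y i - y j) = 0 := by
      intro j hj i _
      by_cases h : ψ ω i j = 0
      · simp [h]
      · have := hnbhd ω j hj i (hsupp ω i j h)
        simp [this]
    have hdecomp : ∑ j ∈ S ω \ Sr ω, d j * ∑ i ∈ Sr ω, ψ ω i j * (y i - y j)
        = ∑ j ∈ S ω \ Sr ω, d j * ((∑ i ∈ Sr ω, ψ ω i j * y i) - y j) := by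
      refine Finset.sum_congr rfl fun j hj => ?_
      congr 1
      have : ∑ i ∈ Sr ω, ψ ω i j * (y i - y j)
          = (∑ i ∈ Sr ω, ψ ω i j * y i) - (∑ i ∈ Sr ω, ψ ω i j) * y j := by
        rw [Finset.sum_mul, ← Finset.sum_sub_distrib]
        exact Finset.sum_congr rfl fun i _ => by ring
      rw [this, hψcol ω j hj, one_mul]
    have h1 : YI ω - Yhat ω
        = ∑ j ∈ S ω \ Sr ω, d j * ∑ i ∈ Sr ω, ψ ω i j * (y i - y j) := by
      rw [hYI, hYhat, hsplit, hdecomp,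
        show ∑ j ∈ S ω \ Sr ω, d j * ((∑ i ∈ Sr ω, ψ ω i j * y i) - y j)
            = (∑ j ∈ S ω \ Sr ω, d j * ∑ i ∈ Sr ω, ψ ω i j * y i)
              - ∑ j ∈ S ω \ Sr ω, d j * y j from by
          rw [← Finset.sum_sub_distrib]
          exact Finset.sum_congr rfl fun j _ => by ring]
      ring
    have h2 : YI ω - Yhat ω = 0 := by
      rw [h1]
      refine Finset.sum_eq_zero fun j hj => ?_
      rw [Finset.sum_eq_zero (hterm0 j hj), mul_zero]
    exact ⟨h1, h2⟩
  refine ⟨key, ?_⟩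
  have : ∀ ω, p ω * (YI ω - Y) = p ω * ((∑ i ∈ S ω, d i * y i) - Y) := by
    intro ω
    have h2 := (key ω).2
    rw [hYhat] at h2
    have : YI ω = ∑ i ∈ S ω, d i * y i := by linarith
    rw [this]
  rw [Finset.sum_congr rfl fun ω _ => this ω, hunbiased]
end

section
/- Suppose d_j ≤ C·N/n for all j ∈ S_m, |y_i − b^⊤x_i| ≤ M for all i ∈ S_r, ψ_{ij} ≤ C'/k for all (i,j), each column j has at most k nonzero entries ψ_{ij}, and n_m k > q. Then the approximate conditional imputation variance satisfies (1/N²)·∑_{i ∈ S_r} ∑_{j ∈ S_m, ψ_{ij}≠0} ψ_{ij}(1−ψ_{ij})·(n_m k)/(n_m k − q)·d_j²·(y_i − b^⊤x_i)² ≤ C''·(1/n)·(n_m/n) for a constant C'' depending only on C, C', M, and the ratio (n_m k)/(n_m k − q); in particular it is O(1/n) when n_m ≤ n. -/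
open Finset

/-- bound on the approximate conditional imputation variance,
Var^{app}_I(Ŷ_I)/N² ≤ C''·(1/n)·(n_m/n) with explicit constant C''. -/
theorem stmt11 {ιr ιm : Type*} [Fintype ιr] [Fintype ιm] {q : ℕ}
    (C C' M N n : ℝ) (hC : 0 < C) (hC' : 0 < C') (hM : 0 < M)
    (hN : 0 < N) (hn : 0 < n)
    (k : ℕ) (hk : 0 < k)
    (d_m : ιm → ℝ) (hd0 : ∀ j, 0 ≤ d_m j) (hd : ∀ j, d_m j ≤ C * N / n)
    (x : ιr → Fin q → ℝ) (b : Fin q → ℝ) (y : ιr → ℝ)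
    (hres : ∀ i, |y i - ∑ t, b t * x i t| ≤ M)
    (ψ : ιr → ιm → ℝ) (hψ0 : ∀ i j, 0 ≤ ψ i j)
    (hψub : ∀ i j, ψ i j ≤ C' / k)
    (hsupp : ∀ j, (Finset.univ.filter fun i => ψ i j ≠ 0).card ≤ k)
    (hdf : (q : ℝ) < (Fintype.card ιm : ℝ) * k) :
    (1 / N ^ 2) * ∑ i, ∑ j,
        ψ i j * (1 - ψ i j)
          * (((Fintype.card ιm : ℝ) * k) / ((Fintype.card ιm : ℝ) * k - q))
          * d_m j ^ 2 * (y i - ∑ t, b t * x i t) ^ 2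
      ≤ (C ^ 2 * C' * M ^ 2
          * (((Fintype.card ιm : ℝ) * k) / ((Fintype.card ιm : ℝ) * k - q)))
        * (1 / n) * ((Fintype.card ιm : ℝ) / n) := by
  set nm : ℝ := (Fintype.card ιm : ℝ) with hnm
  set F : ℝ := nm * k / (nm * k - q) with hFdef
  have hden : (0:ℝ) < nm * k - q := by linarith
  have hnum : (0:ℝ) ≤ nm * k := by positivity
  have hF : 0 ≤ F := div_nonneg hnum hden.le
  set K : ℝ := F * (C * N / n) ^ 2 * M ^ 2 with hKdef
  have hK : 0 ≤ K := by positivity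
  have hkR : (0:ℝ) < k := by exact_mod_cast hk
  -- per-column bound on the sum of ψ
  have hcol : ∀ j, ∑ i, ψ i j ≤ C' := by
    intro j
    have h1 : ∑ i, ψ i j = ∑ i ∈ Finset.univ.filter (fun i => ψ i j ≠ 0), ψ i j :=
      (Finset.sum_filter_ne_zero _).symm
    rw [h1]
    calc ∑ i ∈ Finset.univ.filter (fun i => ψ i j ≠ 0), ψ i j
        ≤ (Finset.univ.filter (fun i => ψ i j ≠ 0)).card • (C' / k) :=
          Finset.sum_le_card_nsmul _ _ _ (fun i _ => hψub i j)
      _ = ((Finset.univ.filter (fun i => ψ i j ≠ 0)).card : ℝ) * (C' / k) := by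
          rw [nsmul_eq_mul]
      _ ≤ (k : ℝ) * (C' / k) := by
          apply mul_le_mul_of_nonneg_right
          · exact_mod_cast hsupp j
          · positivity
      _ = C' := by field_simp
  -- bound the double sum
  have hsum : ∑ i, ∑ j, ψ i j * (1 - ψ i j) * F * d_m j ^ 2
        * (y i - ∑ t, b t * x i t) ^ 2 ≤ nm * (C' * K) := by
    rw [Finset.sum_comm]
    calc ∑ j, ∑ i, ψ i j * (1 - ψ i j) * F * d_m j ^ 2 * (y i - ∑ t, b t * x i t) ^ 2
        ≤ ∑ j : ιm, C' * K := by
          apply Finset.sum_le_sum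
          intro j _
          calc ∑ i, ψ i j * (1 - ψ i j) * F * d_m j ^ 2 * (y i - ∑ t, b t * x i t) ^ 2
              ≤ ∑ i, ψ i j * K := by
                apply Finset.sum_le_sum
                intro i _
                have h1 : ψ i j * (1 - ψ i j) * F * d_m j ^ 2 * (y i - ∑ t, b t * x i t) ^ 2
                    = (ψ i j * (1 - ψ i j)) * (F * d_m j ^ 2 * (y i - ∑ t, b t * x i t) ^ 2) := by
                  ring
                rw [h1]
                have ha : ψ i j * (1 - ψ i j) ≤ ψ i j := by nlinarith [hψ0 i j, sq_nonneg (ψ i j)]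
                have hb : F * d_m j ^ 2 * (y i - ∑ t, b t * x i t) ^ 2 ≤ K := by
                  rw [hKdef]
                  have hd2 : d_m j ^ 2 ≤ (C * N / n) ^ 2 := by
                    have := hd j; have := hd0 j; nlinarith
                  have hr2 : (y i - ∑ t, b t * x i t) ^ 2 ≤ M ^ 2 := by
                    have := hres i
                    nlinarith [abs_nonneg (y i - ∑ t, b t * x i t),
                      sq_abs (y i - ∑ t, b t * x i t)]
                  have h3 : F * d_m j ^ 2 ≤ F * (C * N / n) ^ 2 :=
                    mul_le_mul_of_nonneg_left hd2 hF
                  calc F * d_m j ^ 2 * (y i - ∑ t, b t * x i t) ^ 2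
                      ≤ F * (C * N / n) ^ 2 * (y i - ∑ t, b t * x i t) ^ 2 :=
                        mul_le_mul_of_nonneg_right h3 (sq_nonneg _)
                    _ ≤ F * (C * N / n) ^ 2 * M ^ 2 :=
                        mul_le_mul_of_nonneg_left hr2 (by positivity)
                exact mul_le_mul ha hb (by positivity) (hψ0 i j)
            _ = (∑ i, ψ i j) * K := by rw [← Finset.sum_mul]
            _ ≤ C' * K := mul_le_mul_of_nonneg_right (hcol j) hK
      _ = nm * (C' * K) := by
          rw [Finset.sum_const, Finset.card_univ, nsmul_eq_mul]
  have hN2 : (0:ℝ) < 1 / N ^ 2 := by positivity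
  calc (1 / N ^ 2) * ∑ i, ∑ j, ψ i j * (1 - ψ i j) * F * d_m j ^ 2
          * (y i - ∑ t, b t * x i t) ^ 2
      ≤ (1 / N ^ 2) * (nm * (C' * K)) := by
        exact mul_le_mul_of_nonneg_left hsum hN2.le
    _ = (C ^ 2 * C' * M ^ 2 * F) * (1 / n) * (nm / n) := by
        rw [hKdef]; field_simp
end

section
/- Under the linear model y_i = β^⊤x_i + ε_i with E_m[ε_i] = 0, E_m[ε_i²] = σ², and E_m[ε_iε_j] = 0 for i ≠ j, the model variance of the conditional imputation expectation of the normalized error is Var_m(E_I[(Ŷ_I − Ŷ)/N]) = (σ²/N²)·[∑_{i ∈ S_r} (∑_{j ∈ S_m} d_j ψ_{ij})² + ∑_{j ∈ S_m} d_j²]. -/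
open Finset

lemma key12 {Ω ι κ : Type*} [Fintype Ω] [Fintype ι] [Fintype κ]
    (pm : Ω → ℝ) (a : ι → ℝ) (b : κ → ℝ) (f : Ω → ι → ℝ) (g : Ω → κ → ℝ)
    (C : ι → κ → ℝ) (h : ∀ i j, ∑ ω, pm ω * (f ω i * g ω j) = C i j) :
    ∑ ω, pm ω * ((∑ i, a i * f ω i) * (∑ j, b j * g ω j))
      = ∑ i, ∑ j, a i * b j * C i j := by
  have e : ∀ ω, pm ω * ((∑ i, a i * f ω i) * (∑ j, b j * g ω j))
      = ∑ i, ∑ j, a i * b j * (pm ω * (f ω i * g ω j)) := by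
    intro ω
    rw [Finset.sum_mul_sum, Finset.mul_sum]
    refine Finset.sum_congr rfl fun i _ => ?_
    rw [Finset.mul_sum]
    exact Finset.sum_congr rfl fun j _ => by ring
  simp_rw [e]
  rw [Finset.sum_comm]
  refine Finset.sum_congr rfl fun i _ => ?_
  rw [Finset.sum_comm]
  refine Finset.sum_congr rfl fun j _ => ?_
  rw [← Finset.mul_sum, h]

lemma mean_lin {Ω ι : Type*} [Fintype Ω] [Fintype ι]
    (pm : Ω → ℝ) (a : ι → ℝ) (f : Ω → ι → ℝ)
    (h0 : ∀ i, ∑ ω, pm ω * f ω i = 0) :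
    ∑ ω, pm ω * (∑ i, a i * f ω i) = 0 := by
  have e : ∀ ω, pm ω * (∑ i, a i * f ω i) = ∑ i, a i * (pm ω * f ω i) := by
    intro ω
    rw [Finset.mul_sum]
    exact Finset.sum_congr rfl fun i _ => by ring
  simp_rw [e]
  rw [Finset.sum_comm]
  simp_rw [← Finset.mul_sum, h0, mul_zero, Finset.sum_const_zero]

lemma diag_sum {ι : Type*} [Fintype ι] [DecidableEq ι] (a : ι → ℝ) (σ2 : ℝ) :
    ∑ i, ∑ i', a i * a i' * (if i = i' then σ2 else 0) = σ2 * ∑ i, a i ^ 2 := by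
  rw [Finset.mul_sum]
  refine Finset.sum_congr rfl fun i _ => ?_
  rw [Finset.sum_eq_single i (fun i' _ h => by rw [if_neg (fun e => h e.symm), mul_zero])
    (fun h => absurd (Finset.mem_univ i) h)]
  rw [if_pos rfl]
  ring

/-- exact model variance of the conditional imputation expectation of the
normalized error: Var_m(E_I[(Ŷ_I − Ŷ)/N]) = (σ²/N²)[∑_i (∑_j d_j ψ_{ij})² + ∑_j d_j²]. -/
theorem stmt12 {ιr ιm : Type*} [Fintype ιr] [Fintype ιm] {Q : ℕ}
    {Ωm : Type*} [Fintype Ωm]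
    (pm : Ωm → ℝ) (hpm : ∀ ω, 0 ≤ pm ω) (hpm1 : ∑ ω, pm ω = 1)
    (σ2 N : ℝ)
    (d_m : ιm → ℝ) (x_r : ιr → Fin Q → ℝ) (x_m : ιm → Fin Q → ℝ)
    (β : Fin Q → ℝ) (ψ : ιr → ιm → ℝ)
    (εr : Ωm → ιr → ℝ) (εm : Ωm → ιm → ℝ)
    (hεr0 : ∀ i, ∑ ω, pm ω * εr ω i = 0)
    (hεm0 : ∀ j, ∑ ω, pm ω * εm ω j = 0)
    (hεr2 : ∀ i, ∑ ω, pm ω * εr ω i ^ 2 = σ2)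
    (hεm2 : ∀ j, ∑ ω, pm ω * εm ω j ^ 2 = σ2)
    (hεrr : ∀ i i', i ≠ i' → ∑ ω, pm ω * (εr ω i * εr ω i') = 0)
    (hεmm : ∀ j j', j ≠ j' → ∑ ω, pm ω * (εm ω j * εm ω j') = 0)
    (hεrm : ∀ i j, ∑ ω, pm ω * (εr ω i * εm ω j) = 0)
    (Z : Ωm → ℝ)
    (hZ : ∀ ω, Z ω = (1 / N) *
      ((∑ j, d_m j * ∑ i, ψ i j * ((∑ t, β t * x_r i t) + εr ω i))
        - ∑ j, d_m j * ((∑ t, β t * x_m j t) + εm ω j))) :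
    ∑ ω, pm ω * (Z ω - ∑ ω', pm ω' * Z ω') ^ 2
      = (σ2 / N ^ 2) * ((∑ i, (∑ j, d_m j * ψ i j) ^ 2) + ∑ j, d_m j ^ 2) := by
  classical
  set a : ιr → ℝ := fun i => ∑ j, d_m j * ψ i j with ha
  set c : ℝ := (1 / N) *
      ((∑ j, d_m j * ∑ i, ψ i j * (∑ t, β t * x_r i t))
        - ∑ j, d_m j * (∑ t, β t * x_m j t)) with hc
  have hZ' : ∀ ω, Z ω = c + (1 / N) *
      ((∑ i, a i * εr ω i) - ∑ j, d_m j * εm ω j) := by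
    intro ω
    rw [hZ, hc]
    have h1 : ∀ j, d_m j * ∑ i, ψ i j * ((∑ t, β t * x_r i t) + εr ω i)
        = d_m j * (∑ i, ψ i j * (∑ t, β t * x_r i t)) + ∑ i, d_m j * (ψ i j * εr ω i) := by
      intro j
      simp [mul_add, Finset.sum_add_distrib, Finset.mul_sum]
    simp_rw [h1]
    rw [Finset.sum_add_distrib, Finset.sum_comm]
    have h2 : ∀ i, ∑ j, d_m j * (ψ i j * εr ω i) = a i * εr ω i := by
      intro i
      rw [ha, Finset.sum_mul]
      exact Finset.sum_congr rfl fun j _ => by ring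
    simp_rw [h2, mul_add, Finset.sum_add_distrib]
    ring
  have hA0 := mean_lin pm a εr hεr0
  have hB0 := mean_lin pm d_m εm hεm0
  have hmean : ∑ ω', pm ω' * Z ω' = c := by
    have e : ∀ ω, pm ω * Z ω = pm ω * c
        + (1 / N) * (pm ω * (∑ i, a i * εr ω i))
        - (1 / N) * (pm ω * (∑ j, d_m j * εm ω j)) := by
      intro ω; rw [hZ' ω]; ring
    simp_rw [e]
    rw [Finset.sum_sub_distrib, Finset.sum_add_distrib, ← Finset.sum_mul, hpm1,
      ← Finset.mul_sum, ← Finset.mul_sum, hA0, hB0]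
    ring
  have hdiff : ∀ ω, Z ω - ∑ ω', pm ω' * Z ω'
      = (1 / N) * ((∑ i, a i * εr ω i) - ∑ j, d_m j * εm ω j) := by
    intro ω; rw [hZ' ω, hmean]; ring
  simp_rw [hdiff]
  have expand : ∀ ω, pm ω * ((1 / N) * ((∑ i, a i * εr ω i) - ∑ j, d_m j * εm ω j)) ^ 2
      = (1 / N ^ 2) * (pm ω * ((∑ i, a i * εr ω i) * (∑ i, a i * εr ω i))
          - 2 * (pm ω * ((∑ i, a i * εr ω i) * (∑ j, d_m j * εm ω j)))
          + pm ω * ((∑ j, d_m j * εm ω j) * (∑ j, d_m j * εm ω j))) := by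
    intro ω; ring
  simp_rw [expand]
  rw [← Finset.mul_sum, Finset.sum_add_distrib, Finset.sum_sub_distrib, ← Finset.mul_sum]
  have hA : ∑ ω, pm ω * ((∑ i, a i * εr ω i) * (∑ i, a i * εr ω i))
      = σ2 * ∑ i, a i ^ 2 := by
    rw [key12 pm a a εr εr (fun i i' => if i = i' then σ2 else 0)]
    · exact diag_sum a σ2
    · intro i i'
      by_cases h : i = i'
      · subst h
        simp only [if_pos rfl, ← hεr2 i]
        exact Finset.sum_congr rfl fun ω _ => by ring
      · simp [h, hεrr i i' h]
  have hAB : ∑ ω, pm ω * ((∑ i, a i * εr ω i) * (∑ j, d_m j * εm ω j)) = 0 := by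
    rw [key12 pm a d_m εr εm (fun _ _ => 0) hεrm]
    simp
  have hB : ∑ ω, pm ω * ((∑ j, d_m j * εm ω j) * (∑ j, d_m j * εm ω j))
      = σ2 * ∑ j, d_m j ^ 2 := by
    rw [key12 pm d_m d_m εm εm (fun j j' => if j = j' then σ2 else 0)]
    · exact diag_sum d_m σ2
    · intro j j'
      by_cases h : j = j'
      · subst h
        simp only [if_pos rfl, ← hεm2 j]
        exact Finset.sum_congr rfl fun ω _ => by ring
      · simp [h, hεmm j j' h]
  rw [hA, hAB, hB]
  ring
end

section
/- Assume d_i ≤ C·N/n for all i, ψ_{ij} ≤ C'/k for all (i,j), and for each pair j ≠ ℓ ∈ S_m the number of common potential donors satisfies #{i ∈ S_r : ψ_{ij} ψ_{iℓ} > 0} ≤ C''·k²/n_m. Then (σ²/N²)·[∑_{i ∈ S_r}(∑_{j ∈ S_m} d_j ψ_{ij})² + ∑_{j ∈ S_m} d_j²] = O(1/n) when n_m ≤ n, i.e., the model variance of the conditional imputation expectation of the normalized imputation error is of order 1/n. -/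
open Finset

/-- under (A2), the ψ ≤ C'/k bound and the overlap condition (A7),
the model variance of the conditional imputation expectation of the normalized error
is O(1/n), with explicit constant. -/
theorem stmt13 {ιr ιm : Type*} [Fintype ιr] [Fintype ιm]
    (C C' C'' σ2 N n : ℝ) (hC : 0 < C) (hC' : 0 < C') (hC'' : 0 < C'')
    (hσ : 0 ≤ σ2) (hN : 0 < N) (hn : 0 < n)
    (k : ℕ) (hk : 1 ≤ k)
    (hnm : (Fintype.card ιm : ℝ) ≤ n)
    (d_m : ιm → ℝ) (hd0 : ∀ j, 0 ≤ d_m j) (hd : ∀ j, d_m j ≤ C * N / n)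
    (ψ : ιr → ιm → ℝ) (hψ0 : ∀ i j, 0 ≤ ψ i j)
    (hψub : ∀ i j, ψ i j ≤ C' / k)
    (hsupp : ∀ j, (Finset.univ.filter fun i => ψ i j ≠ 0).card ≤ k)
    (hoverlap : ∀ j l : ιm, j ≠ l →
      ((Finset.univ.filter fun i => 0 < ψ i j * ψ i l).card : ℝ)
        ≤ C'' * k ^ 2 / (Fintype.card ιm : ℝ)) :
    (σ2 / N ^ 2) * ((∑ i, (∑ j, d_m j * ψ i j) ^ 2) + ∑ j, d_m j ^ 2)
      ≤ σ2 * C ^ 2 * (C' ^ 2 + C'' * C' ^ 2 + 1) / n := by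
  rcases isEmpty_or_nonempty ιm with hE | hNE
  · simp only [Finset.univ_eq_empty, Finset.sum_empty]
    have h0 : (σ2 / N ^ 2) * ((∑ i : ιr, (0:ℝ) ^ 2) + 0) = 0 := by simp
    rw [h0]
    positivity
  · classical
    set m : ℝ := (Fintype.card ιm : ℝ) with hmdef
    have hm : 0 < m := by
      have : 0 < Fintype.card ιm := Fintype.card_pos
      rw [hmdef]
      exact_mod_cast this
    have hkR : (1:ℝ) ≤ (k:ℝ) := by exact_mod_cast hk
    have hkpos : (0:ℝ) < (k:ℝ) := lt_of_lt_of_le one_pos hkR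
    set D : ℝ := C * N / n with hDdef
    have hD : 0 < D := by positivity
    -- diagonal bound
    have hdiag : ∀ j, (∑ i, ψ i j ^ 2) ≤ C' ^ 2 / k := by
      intro j
      have h1 : (∑ i, ψ i j ^ 2)
          = ∑ i ∈ Finset.univ.filter fun i => ψ i j ≠ 0, ψ i j ^ 2 := by
        refine (Finset.sum_filter_of_ne ?_).symm
        intro i _ h
        exact fun h0 => h (by rw [h0]; ring)
      have h2 : (∑ i ∈ Finset.univ.filter fun i => ψ i j ≠ 0, ψ i j ^ 2)
          ≤ (Finset.univ.filter fun i => ψ i j ≠ 0).card • ((C' / k) ^ 2) := by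
        refine Finset.sum_le_card_nsmul _ _ _ ?_
        intro i _
        exact pow_le_pow_left₀ (hψ0 i j) (hψub i j) 2
      have h3 : ((Finset.univ.filter fun i => ψ i j ≠ 0).card • ((C' / k) ^ 2) : ℝ)
          ≤ (k:ℝ) * ((C' / k) ^ 2) := by
        rw [nsmul_eq_mul]
        have : ((Finset.univ.filter fun i => ψ i j ≠ 0).card : ℝ) ≤ (k:ℝ) := by
          exact_mod_cast hsupp j
        exact mul_le_mul_of_nonneg_right this (by positivity)
      have h4 : (k:ℝ) * ((C' / k) ^ 2) = C' ^ 2 / k := by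
        field_simp
      calc (∑ i, ψ i j ^ 2) = _ := h1
        _ ≤ _ := h2
        _ ≤ (k:ℝ) * ((C' / k) ^ 2) := h3
        _ = C' ^ 2 / k := h4
    -- off-diagonal bound
    have hoff : ∀ j l, j ≠ l → (∑ i, ψ i j * ψ i l) ≤ C'' * C' ^ 2 / m := by
      intro j l hjl
      have h1 : (∑ i, ψ i j * ψ i l)
          = ∑ i ∈ Finset.univ.filter fun i => 0 < ψ i j * ψ i l, ψ i j * ψ i l := by
        refine (Finset.sum_filter_of_ne ?_).symm
        intro i _ h
        exact lt_of_le_of_ne (mul_nonneg (hψ0 i j) (hψ0 i l)) (Ne.symm h)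
      have h2 : (∑ i ∈ Finset.univ.filter fun i => 0 < ψ i j * ψ i l, ψ i j * ψ i l)
          ≤ (Finset.univ.filter fun i => 0 < ψ i j * ψ i l).card • ((C' / k) ^ 2) := by
        refine Finset.sum_le_card_nsmul _ _ _ ?_
        intro i _
        have := mul_le_mul (hψub i j) (hψub i l) (hψ0 i l) (le_of_lt (by positivity : (0:ℝ) < C'/k))
        calc ψ i j * ψ i l ≤ (C'/k) * (C'/k) := this
          _ = (C'/k)^2 := (sq (C'/k)).symm
      have h3 : ((Finset.univ.filter fun i => 0 < ψ i j * ψ i l).card • ((C' / k) ^ 2) : ℝ)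
          ≤ (C'' * k ^ 2 / m) * ((C' / k) ^ 2) := by
        rw [nsmul_eq_mul]
        exact mul_le_mul_of_nonneg_right (hoverlap j l hjl) (by positivity)
      have h4 : (C'' * (k:ℝ) ^ 2 / m) * ((C' / k) ^ 2) = C'' * C' ^ 2 / m := by
        field_simp
      calc (∑ i, ψ i j * ψ i l) = _ := h1
        _ ≤ _ := h2
        _ ≤ _ := h3
        _ = _ := h4
    -- expansion
    have expand : (∑ i, (∑ j, d_m j * ψ i j) ^ 2)
        = ∑ j, ∑ l, d_m j * d_m l * ∑ i, ψ i j * ψ i l := by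
      simp_rw [sq, Finset.sum_mul_sum, Finset.mul_sum]
      rw [Finset.sum_comm]
      refine Finset.sum_congr rfl fun j _ => ?_
      rw [Finset.sum_comm]
      refine Finset.sum_congr rfl fun l _ => ?_
      refine Finset.sum_congr rfl fun i _ => ?_
      ring
    set A : ℝ := D ^ 2 * (C' ^ 2 / k) with hAdef
    set B : ℝ := D ^ 2 * (C'' * C' ^ 2 / m) with hBdef
    have hA0 : 0 ≤ A := by positivity
    have hB0 : 0 ≤ B := by positivity
    have hterm : ∀ j l : ιm, d_m j * d_m l * ∑ i, ψ i j * ψ i l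
        ≤ if j = l then A else B := by
      intro j l
      have hdD : ∀ j, d_m j ≤ D := hd
      have hdd : d_m j * d_m l ≤ D ^ 2 := by
        calc d_m j * d_m l ≤ D * D := mul_le_mul (hdD j) (hdD l) (hd0 l) (le_of_lt hD)
          _ = D ^ 2 := (sq D).symm
      have hdd0 : 0 ≤ d_m j * d_m l := mul_nonneg (hd0 j) (hd0 l)
      by_cases hjl : j = l
      · subst hjl
        simp only [if_pos rfl]
        have hs0 : 0 ≤ ∑ i, ψ i j * ψ i j :=
          Finset.sum_nonneg fun i _ => mul_nonneg (hψ0 i j) (hψ0 i j)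
        have hs : (∑ i, ψ i j * ψ i j) ≤ C' ^ 2 / k := by
          have := hdiag j
          simpa [sq] using this
        exact mul_le_mul hdd hs hs0 (by positivity)
      · simp only [if_neg hjl]
        have hs0 : 0 ≤ ∑ i, ψ i j * ψ i l :=
          Finset.sum_nonneg fun i _ => mul_nonneg (hψ0 i j) (hψ0 i l)
        exact mul_le_mul hdd (hoff j l hjl) hs0 (by positivity)
    -- sum of the ite bound
    have hite : ∀ j : ιm, (∑ l, if j = l then A else B) = (A - B) + m * B := by
      intro j
      have : ∀ l : ιm, (if j = l then A else B) = (if j = l then A - B else 0) + B := by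
        intro l; by_cases h : j = l <;> simp [h]
      simp_rw [this]
      rw [Finset.sum_add_distrib, Finset.sum_ite_eq, Finset.sum_const, Finset.card_univ,
        nsmul_eq_mul]
      simp [hmdef]
    have hsum1 : (∑ i, (∑ j, d_m j * ψ i j) ^ 2) ≤ m * A + m * m * B := by
      rw [expand]
      calc (∑ j, ∑ l, d_m j * d_m l * ∑ i, ψ i j * ψ i l)
          ≤ ∑ j : ιm, ∑ l : ιm, (if j = l then A else B) := by
            refine Finset.sum_le_sum fun j _ => Finset.sum_le_sum fun l _ => hterm j l
        _ = ∑ j : ιm, ((A - B) + m * B) := Finset.sum_congr rfl fun j _ => hite j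
        _ = m * ((A - B) + m * B) := by
            rw [Finset.sum_const, Finset.card_univ, nsmul_eq_mul, hmdef]
        _ ≤ m * A + m * m * B := by nlinarith [hm, hB0]
    have hsum2 : (∑ j, d_m j ^ 2) ≤ m * D ^ 2 := by
      calc (∑ j, d_m j ^ 2) ≤ Finset.univ.card • (D ^ 2) := by
            refine Finset.sum_le_card_nsmul _ _ _ ?_
            intro j _
            exact pow_le_pow_left₀ (hd0 j) (hd j) 2
        _ = m * D ^ 2 := by rw [nsmul_eq_mul, Finset.card_univ]
    -- combine
    have hinner : (∑ i, (∑ j, d_m j * ψ i j) ^ 2) + ∑ j, d_m j ^ 2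
        ≤ n * D ^ 2 * (C' ^ 2 + C'' * C' ^ 2 + 1) := by
      have h1 : m * A ≤ n * D ^ 2 * C' ^ 2 := by
        rw [hAdef]
        have hck : C' ^ 2 / k ≤ C' ^ 2 := by
          rw [div_le_iff₀ hkpos]; nlinarith [sq_nonneg C']
        calc m * (D ^ 2 * (C' ^ 2 / k)) ≤ n * (D ^ 2 * C' ^ 2) := by
              apply mul_le_mul hnm (mul_le_mul_of_nonneg_left hck (by positivity)) (by positivity) (le_of_lt hn)
          _ = n * D ^ 2 * C' ^ 2 := by ring
      have h2 : m * m * B ≤ n * D ^ 2 * (C'' * C' ^ 2) := by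
        have heq : m * m * B = m * (D ^ 2 * (C'' * C' ^ 2)) := by
          rw [hBdef]; field_simp
        rw [heq]
        calc m * (D ^ 2 * (C'' * C' ^ 2)) ≤ n * (D ^ 2 * (C'' * C' ^ 2)) :=
              mul_le_mul_of_nonneg_right hnm (by positivity)
          _ = n * D ^ 2 * (C'' * C' ^ 2) := by ring
      have h3 : m * D ^ 2 ≤ n * D ^ 2 :=
        mul_le_mul_of_nonneg_right hnm (by positivity)
      nlinarith [hsum1, hsum2]
    have hfinal : (σ2 / N ^ 2) * (n * D ^ 2 * (C' ^ 2 + C'' * C' ^ 2 + 1))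
        = σ2 * C ^ 2 * (C' ^ 2 + C'' * C' ^ 2 + 1) / n := by
      rw [hDdef]; field_simp
    calc (σ2 / N ^ 2) * ((∑ i, (∑ j, d_m j * ψ i j) ^ 2) + ∑ j, d_m j ^ 2)
        ≤ (σ2 / N ^ 2) * (n * D ^ 2 * (C' ^ 2 + C'' * C' ^ 2 + 1)) :=
          mul_le_mul_of_nonneg_left hinner (by positivity)
      _ = _ := hfinal
end
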